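/- (Q-commutative q-binomial theorem) Let A be an associative unital algebra over a commutative ring R, let q, Q be central elements (scalars), and let x, y in A satisfy y*x = Q*(x*y). Define the ordered q-binomial power (x+y)^n_{<q} = (x+y)(x+q y)(x+q^2 y)···(x+q^{n-1} y). Then (x+y)^n_{<q} = sum_{k=0}^n C(n,k)_{Q,q} q^{k(k-1)/2} x^{n-k} y^k, where C(n,k)_{Q,q} are the (Q,q)-binomial coefficients defined by the recursion C(n+1,k) = Q^k C(n,k) + q^{n+1-k} C(n,k-1), C(n,0) = C(n,n) = 1. -/
import Mathlib


/-- The (Q,q)-binomial coefficients `C(n,k)_{Q,q}`, defined by the Pascal-type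
    recursion `C(n+1,k) = Q^k C(n,k) + q^{n+1-k} C(n,k-1)` with
    `C(n,0) = C(n,n) = 1` and `C(n,k) = 0` for `k > n`. -/
def qqBinom {R : Type*} [CommRing R] (Q q : R) : ℕ → ℕ → R
  | 0, 0 => 1
  | 0, _ + 1 => 0
  | _ + 1, 0 => 1
  | n + 1, k + 1 => Q ^ (k + 1) * qqBinom Q q n (k + 1) + q ^ (n - k) * qqBinom Q q n k

/-- The ordered q-binomial power `(x+y)^n_{<q} = (x+y)(x+qy)(x+q²y)⋯(x+q^{n-1}y)`,
    multiplied left-to-right. -/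
def ascBinom {R : Type*} [CommRing R] {A : Type*} [Ring A] [Algebra R A]
    (x y : A) (q : R) : ℕ → A
  | 0 => 1
  | n + 1 => ascBinom x y q n * (x + q ^ n • y)

lemma qqBinom_zero_of_lt {R : Type*} [CommRing R] (Q q : R) :
    ∀ n k, n < k → qqBinom Q q n k = 0 := by
  intro n
  induction n with
  | zero => intro k hk; match k, hk with
    | k + 1, _ => rfl
  | succ n ih =>
    intro k hk
    match k, hk with
    | k + 1, hk =>
      rw [qqBinom, ih (k+1) (by omega), ih k (by omega)]
      ring

lemma ypow_mul_x {R : Type*} [CommRing R] {A : Type*} [Ring A] [Algebra R A]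
    (Q : R) (x y : A) (hyx : y * x = Q • (x * y)) :
    ∀ k : ℕ, y ^ k * x = Q ^ k • (x * y ^ k) := by
  intro k
  induction k with
  | zero => simp
  | succ k ih =>
    rw [pow_succ, mul_assoc, hyx, mul_smul_comm, ← mul_assoc, ih,
      smul_mul_assoc, smul_smul, pow_succ, mul_assoc, ← pow_succ, mul_comm Q (Q ^ k)]


/-- Q-commutative q-binomial theorem:
    if `y x = Q (x y)` then
    `(x+y)^n_{<q} = ∑_{k=0}^n C(n,k)_{Q,q} q^{k(k-1)/2} x^{n-k} y^k`. -/
theorem q_binomial_Q_commutative {R : Type*} [CommRing R] {A : Type*} [Ring A]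
    [Algebra R A] (Q q : R) (x y : A) (hyx : y * x = Q • (x * y)) (n : ℕ) :
    ascBinom x y q n =
      ∑ k ∈ Finset.range (n + 1),
        (qqBinom Q q n k * q ^ (k * (k - 1) / 2)) • (x ^ (n - k) * y ^ k) := by
  induction n with
  | zero => simp [ascBinom, qqBinom]
  | succ n ih =>
    rw [ascBinom, ih, Finset.sum_mul]
    have key : ∀ k ∈ Finset.range (n + 1),
        ((qqBinom Q q n k * q ^ (k * (k - 1) / 2)) • (x ^ (n - k) * y ^ k)) * (x + q ^ n • y)
        = (Q ^ k * qqBinom Q q n k * q ^ (k * (k - 1) / 2)) • (x ^ (n + 1 - k) * y ^ k)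
          + (qqBinom Q q n k * q ^ ((k+1) * k / 2) * q ^ (n - k)) • (x ^ (n - k) * y ^ (k+1)) := by
      intro k hk
      rw [Finset.mem_range] at hk
      have hk' : k ≤ n := by omega
      rw [mul_add, smul_mul_assoc, smul_mul_assoc]
      congr 1
      · rw [mul_assoc, ypow_mul_x Q x y hyx k, mul_smul_comm, smul_smul, ← mul_assoc,
          ← pow_succ]
        have h1 : n - k + 1 = n + 1 - k := by omega
        rw [h1]
        ring_nf
      · rw [mul_smul_comm, smul_smul, mul_assoc (x ^ (n - k)) (y ^ k) y, ← pow_succ]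
        have h1 : qqBinom Q q n k * q ^ (k * (k - 1) / 2) * q ^ n
            = qqBinom Q q n k * q ^ ((k+1) * k / 2) * q ^ (n - k) := by
          rw [mul_assoc, mul_assoc, ← pow_add, ← pow_add]
          have h2 : (k + 1) * k / 2 = k * (k - 1) / 2 + k := by
            have := Nat.triangle_succ k
            simpa using this
          congr 2
          omega
        rw [h1]
    rw [Finset.sum_congr rfl key, Finset.sum_add_distrib]
    rw [Finset.sum_range_succ' (fun k => (qqBinom Q q (n+1) k * q ^ (k * (k - 1) / 2)) • (x ^ (n + 1 - k) * y ^ k))]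
    have hg0 : (qqBinom Q q (n+1) 0 * q ^ (0 * (0 - 1) / 2)) • (x ^ (n + 1 - 0) * y ^ 0)
        = (Q ^ 0 * qqBinom Q q n 0 * q ^ (0 * (0 - 1) / 2)) • (x ^ (n + 1 - 0) * y ^ 0) := by
      have h1 : qqBinom Q q (n+1) 0 = 1 := by cases n <;> rfl
      have h2 : qqBinom Q q n 0 = 1 := by cases n <;> rfl
      rw [h1, h2]; ring_nf
    rw [hg0]
    have hsplit : ∀ j ∈ Finset.range (n + 1),
        (qqBinom Q q (n+1) (j+1) * q ^ ((j+1) * ((j+1) - 1) / 2)) • (x ^ (n + 1 - (j+1)) * y ^ (j+1))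
        = (Q ^ (j+1) * qqBinom Q q n (j+1) * q ^ ((j+1) * ((j+1) - 1) / 2)) • (x ^ (n + 1 - (j+1)) * y ^ (j+1))
          + (qqBinom Q q n j * q ^ ((j+1) * j / 2) * q ^ (n - j)) • (x ^ (n - j) * y ^ (j+1)) := by
      intro j hj
      rw [show qqBinom Q q (n+1) (j+1)
          = Q ^ (j + 1) * qqBinom Q q n (j + 1) + q ^ (n - j) * qqBinom Q q n j from rfl,
        add_mul, add_smul]
      have h1 : n + 1 - (j + 1) = n - j := by omega
      rw [h1, Nat.add_sub_cancel]
      congr 1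
      congr 1
      ring
    rw [Finset.sum_congr rfl hsplit, Finset.sum_add_distrib]
    -- now: ∑_{k∈range(n+1)} A k + ∑ B k = (∑_{j∈range(n+1)} A (j+1) + ∑ B j) + A 0
    rw [Finset.sum_range_succ (fun j => (Q ^ (j+1) * qqBinom Q q n (j+1) * q ^ ((j+1) * ((j+1) - 1) / 2)) • (x ^ (n + 1 - (j+1)) * y ^ (j+1)))]
    rw [Finset.sum_range_succ' (fun k => (Q ^ k * qqBinom Q q n k * q ^ (k * (k - 1) / 2)) • (x ^ (n + 1 - k) * y ^ k))]
    rw [qqBinom_zero_of_lt Q q n (n+1) (by omega)]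
    simp only [mul_zero, zero_mul, zero_smul, add_zero]
    abel
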